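/- Let p > 1, ε > 0, C > 0, d* ∈ ℝ, and let M : [0, T) → (0, ∞) be differentiable with M'(t) ≥ ε and M'(t) ≥ −2d* + C·M(t)^{(p+1)/2} for all t ∈ [0, T). Then T < ∞. -/

import Mathlib

/-!
A derivative bounded below by `ε > 0` makes `M` grow at least linearly, so on `[0, ∞)` eventually
`C M^q ≥ 4 d*` with `q = (p + 1)/2`, hence `M' ≥ (C/2) M^q`. For such a Riccati-type inequality
the function `-M^(1-q)` has derivative at least `(q - 1) C/2 > 0`, so it grows linearly as well,
contradicting its negativity.
-/

open Real ENNReal Filter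

theorem tendsto_atTop_of_eventually_le_deriv {f : ℝ → ℝ} {ε : ℝ} (hε : 0 < ε)
    (hf : ∀ᶠ t in atTop, DifferentiableAt ℝ f t) (hderiv : ∀ᶠ t in atTop, ε ≤ deriv f t) :
    Tendsto f atTop atTop := by
  obtain ⟨a, ha⟩ := eventually_atTop.mp (hf.and hderiv)
  have hlin : ∀ y, a ≤ y → f a + ε * (y - a) ≤ f y := by
    intro y hy
    have := (convex_Ici a).mul_sub_le_image_sub_of_le_deriv
      (fun t ht => (ha t ht).1.continuousAt.continuousWithinAt)
      (fun t ht => ((ha t (interior_subset ht)).1).differentiableWithinAt)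
      (fun t ht => (ha t (interior_subset ht)).2) a Set.self_mem_Ici y hy hy
    linarith
  refine tendsto_atTop_mono' atTop (eventually_atTop.mpr ⟨a, hlin⟩) ?_
  exact tendsto_atTop_add_const_left _ _
    ((tendsto_atTop_add_const_right _ (-a) tendsto_id).const_mul_atTop hε)

theorem false_of_eventually_rpow_le_deriv {f : ℝ → ℝ} {c q : ℝ} (hc : 0 < c) (hq : 1 < q)
    (hf : ∀ᶠ t in atTop, DifferentiableAt ℝ f t) (hpos : ∀ᶠ t in atTop, 0 < f t)
    (hderiv : ∀ᶠ t in atTop, c * f t ^ q ≤ deriv f t) : False := by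
  set g : ℝ → ℝ := fun t => -f t ^ (1 - q)
  have hg : ∀ᶠ t in atTop, HasDerivAt g (-(deriv f t * (1 - q) * f t ^ (1 - q - 1))) t := by
    filter_upwards [hf, hpos] with t hft hfpos
    exact (hft.hasDerivAt.rpow_const (Or.inl hfpos.ne')).neg
  have hg_deriv : ∀ᶠ t in atTop, (q - 1) * c ≤ deriv g t := by
    filter_upwards [hg, hpos, hderiv] with t hgt hfpos hft
    have hcancel : f t ^ q * f t ^ (1 - q - 1) = 1 := by
      rw [← rpow_add hfpos]
      norm_num
    calc (q - 1) * c = (q - 1) * (c * f t ^ q * f t ^ (1 - q - 1)) := by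
          rw [mul_assoc c, hcancel, mul_one]
      _ ≤ (q - 1) * (deriv f t * f t ^ (1 - q - 1)) := by
          gcongr
      _ = deriv g t := by
          rw [hgt.deriv]
          ring
  have hg_top : Tendsto g atTop atTop :=
    tendsto_atTop_of_eventually_le_deriv (mul_pos (by linarith) hc)
      (hg.mono fun _ h => h.differentiableAt) hg_deriv
  have hg_neg : ∀ᶠ t in atTop, g t < 0 :=
    hpos.mono fun t h => neg_lt_zero.mpr (rpow_pos_of_pos h _)
  obtain ⟨t, hgt, hgt'⟩ := (hg_neg.and (hg_top.eventually_gt_atTop 0)).exists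
  linarith

theorem stmt18_general (T : ℝ≥0∞) (M : ℝ → ℝ) (p ε C dstar : ℝ)
    (hp : 1 < p) (hε : 0 < ε) (hC : 0 < C)
    (hdiff : ∀ t : ℝ, 0 ≤ t → ENNReal.ofReal t < T → DifferentiableAt ℝ M t)
    (hpos : ∀ t : ℝ, 0 ≤ t → ENNReal.ofReal t < T → 0 < M t)
    (h1 : ∀ t : ℝ, 0 ≤ t → ENNReal.ofReal t < T → ε ≤ deriv M t)
    (h2 : ∀ t : ℝ, 0 ≤ t → ENNReal.ofReal t < T →
      -2 * dstar + C * M t ^ ((p + 1) / 2) ≤ deriv M t) :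
    T < ⊤ := by
  rw [lt_top_iff_ne_top]
  rintro rfl
  have hall : ∀ᶠ t : ℝ in atTop, 0 ≤ t ∧ ENNReal.ofReal t < ⊤ :=
    (eventually_ge_atTop 0).mono fun t ht => ⟨ht, ofReal_lt_top⟩
  have hM_top : Tendsto M atTop atTop :=
    tendsto_atTop_of_eventually_le_deriv hε (hall.mono fun t ht => hdiff t ht.1 ht.2)
      (hall.mono fun t ht => h1 t ht.1 ht.2)
  have hlarge : ∀ᶠ t in atTop, 4 * dstar ≤ C * M t ^ ((p + 1) / 2) :=
    (((tendsto_rpow_atTop (by linarith)).comp hM_top).const_mul_atTop hC).eventually_ge_atTop _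
  refine false_of_eventually_rpow_le_deriv (half_pos hC) (by linarith : 1 < (p + 1) / 2)
    (hall.mono fun t ht => hdiff t ht.1 ht.2) (hall.mono fun t ht => hpos t ht.1 ht.2) ?_
  filter_upwards [hall, hlarge] with t ht hMt
  linarith [h2 t ht.1 ht.2]

theorem stmt18 (T : ℝ≥0∞) (hT : 0 < T) (M : ℝ → ℝ) (p ε C dstar : ℝ)
    (hp : 1 < p) (hε : 0 < ε) (hC : 0 < C)
    (hdiff : ∀ t : ℝ, 0 ≤ t → ENNReal.ofReal t < T → DifferentiableAt ℝ M t)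
    (hpos : ∀ t : ℝ, 0 ≤ t → ENNReal.ofReal t < T → 0 < M t)
    (h1 : ∀ t : ℝ, 0 ≤ t → ENNReal.ofReal t < T → ε ≤ deriv M t)
    (h2 : ∀ t : ℝ, 0 ≤ t → ENNReal.ofReal t < T →
      -2 * dstar + C * M t ^ ((p + 1) / 2) ≤ deriv M t) :
    T < ⊤ :=
  stmt18_general T M p ε C dstar hp hε hC hdiff hpos h1 h2
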